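/- arXiv:1403.5544 — 2 statements merged into one kernel-verified Lean document; each statement's English description precedes it below -/
import Mathlib

section
/- Let G = (V,E) be a finite 3-regular graph and (V_1,V_2,I) a vertex separator with I independent, no two vertices of I sharing a neighbor, and each vertex of I having a neighbor on each side. Fix \alpha \in (1/2, 1). If max_i (|V_i| + |E_i| + |E_i^I|) + |I| \le \alpha (5/2)|V|, then max_i |V_i| \le \alpha |V|. -/
/-- Edges of `G` with both endpoints in `S`. -/
def edgesWithin {V : Type*} [Fintype V] [DecidableEq V] (G : SimpleGraph V)
    [DecidableRel G.Adj] (S : Finset V) : Finset (Sym2 V) :=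
  G.edgeFinset.filter (fun e => ∀ x ∈ e, x ∈ S)

/-- Edges of `G` with one endpoint in `S` and one in `T`. -/
def edgesBetween {V : Type*} [Fintype V] [DecidableEq V] (G : SimpleGraph V)
    [DecidableRel G.Adj] (S T : Finset V) : Finset (Sym2 V) :=
  G.edgeFinset.filter (fun e => (∃ x ∈ e, x ∈ S) ∧ (∃ x ∈ e, x ∈ T))

/-- Vertices of `S` adjacent to some vertex of `I`. -/
def boundary {V : Type*} [Fintype V] [DecidableEq V] (G : SimpleGraph V)
    [DecidableRel G.Adj] (S I : Finset V) : Finset V :=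
  S.filter (fun v => ∃ u ∈ I, G.Adj u v)

lemma key {V : Type*} [Fintype V] [DecidableEq V] (G : SimpleGraph V) [DecidableRel G.Adj]
    (hreg : ∀ v, G.degree v = 3) (S I : Finset V)
    (hS : ∀ v ∈ S, ∀ w, G.Adj v w → w ∈ S ∨ w ∈ I) :
    3 * S.card ≤ 2 * ((edgesWithin G S).card + (edgesBetween G S I).card) := by
  classical
  set D : Finset (V × V) := (S ×ˢ (Finset.univ : Finset V)).filter (fun p => G.Adj p.1 p.2) with hDdef
  have hmemD : ∀ p : V × V, p ∈ D ↔ p.1 ∈ S ∧ G.Adj p.1 p.2 := by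
    intro p
    rw [hDdef, Finset.mem_filter, Finset.mem_product]
    simp
  have hDcard : D.card = 3 * S.card := by
    have h1 : D.card = ∑ v ∈ S, (D.filter (fun p => p.1 = v)).card := by
      apply Finset.card_eq_sum_card_fiberwise
      intro p hp
      exact ((hmemD p).mp hp).1
    have h2 : ∀ v ∈ S, (D.filter (fun p => p.1 = v)).card = 3 := by
      intro v hv
      have heq : D.filter (fun p => p.1 = v) =
          (G.neighborFinset v).map ⟨fun w => (v, w), fun a b h => by simpa using h⟩ := by
        ext p
        rw [Finset.mem_filter, hmemD, Finset.mem_map]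
        constructor
        · rintro ⟨⟨hv', hadj⟩, h1⟩
          refine ⟨p.2, ?_, ?_⟩
          · rw [SimpleGraph.mem_neighborFinset, ← h1]; exact hadj
          · simp [← h1]
        · rintro ⟨w, hw, rfl⟩
          rw [SimpleGraph.mem_neighborFinset] at hw
          exact ⟨⟨hv, hw⟩, rfl⟩
      rw [heq, Finset.card_map]
      rw [SimpleGraph.card_neighborFinset_eq_degree]
      exact hreg v
    rw [h1, Finset.sum_congr rfl h2, Finset.sum_const, smul_eq_mul, mul_comm]
  have hfib : ∀ e ∈ D.image (fun p => s(p.1, p.2)),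
      (D.filter (fun p => s(p.1, p.2) = e)).card ≤ 2 := by
    intro e _
    induction e with
    | _ a b =>
      have hsub : D.filter (fun p => s(p.1, p.2) = s(a, b)) ⊆ {(a, b), (b, a)} := by
        intro p hp
        rw [Finset.mem_filter] at hp
        have := hp.2
        rw [Sym2.eq_iff] at this
        simp only [Finset.mem_insert, Finset.mem_singleton]
        rcases this with ⟨h1, h2⟩ | ⟨h1, h2⟩
        · left; exact Prod.ext h1 h2
        · right; exact Prod.ext h1 h2
      calc (D.filter (fun p => s(p.1, p.2) = s(a, b))).card
            ≤ ({(a,b),(b,a)} : Finset (V×V)).card := Finset.card_le_card hsub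
        _ ≤ 2 := (Finset.card_insert_le _ _).trans (by simp)
  have himg : D.image (fun p => s(p.1, p.2)) ⊆ edgesWithin G S ∪ edgesBetween G S I := by
    intro e he
    simp only [Finset.mem_image] at he
    obtain ⟨⟨v, w⟩, hp, rfl⟩ := he
    rw [hmemD] at hp
    obtain ⟨hp1, hadj⟩ := hp
    have hedge : s(v, w) ∈ G.edgeFinset := by
      rw [SimpleGraph.mem_edgeFinset]; exact hadj
    rcases hS v hp1 w hadj with h | h
    · apply Finset.mem_union_left
      simp only [edgesWithin, Finset.mem_filter]
      exact ⟨hedge, by intro x hx; rcases Sym2.mem_iff.mp hx with rfl | rfl <;> assumption⟩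
    · apply Finset.mem_union_right
      simp only [edgesBetween, Finset.mem_filter]
      exact ⟨hedge, ⟨v, by simp, hp1⟩, ⟨w, by simp, h⟩⟩
  calc 3 * S.card = D.card := hDcard.symm
    _ ≤ 2 * (D.image (fun p => s(p.1, p.2))).card := Finset.card_le_mul_card_image _ 2 hfib
    _ ≤ 2 * (edgesWithin G S ∪ edgesBetween G S I).card :=
        Nat.mul_le_mul_left _ (Finset.card_le_card himg)
    _ ≤ 2 * ((edgesWithin G S).card + (edgesBetween G S I).card) :=
        Nat.mul_le_mul_left _ (Finset.card_union_le _ _)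

theorem subgraph_balance_implies_vertex_balance {V : Type*} [Fintype V] [DecidableEq V] (G : SimpleGraph V) [DecidableRel G.Adj]
    (hreg : ∀ v, G.degree v = 3)
    (V1 V2 I : Finset V)
    (hcover : ∀ v, v ∈ V1 ∨ v ∈ V2 ∨ v ∈ I)
    (h12 : Disjoint V1 V2) (h1I : Disjoint V1 I) (h2I : Disjoint V2 I)
    (hsep : ∀ u ∈ V1, ∀ v ∈ V2, ¬ G.Adj u v)
    (hind : ∀ u ∈ I, ∀ v ∈ I, ¬ G.Adj u v)
    (hshare : ∀ w, w ∉ I → (I.filter (fun u => G.Adj u w)).card ≤ 1)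
    (hboth : ∀ u ∈ I, (∃ v ∈ V1, G.Adj u v) ∧ (∃ v ∈ V2, G.Adj u v))
    (α : ℝ) (hα1 : 1 / 2 < α) (hα2 : α < 1)
    (hbal : max ((V1.card : ℝ) + (edgesWithin G V1).card + (edgesBetween G V1 I).card)
        ((V2.card : ℝ) + (edgesWithin G V2).card + (edgesBetween G V2 I).card) + I.card
        ≤ α * ((5 / 2) * Fintype.card V)) :
    max (V1.card : ℝ) (V2.card : ℝ) ≤ α * Fintype.card V := by
  have hS1 : ∀ v ∈ V1, ∀ w, G.Adj v w → w ∈ V1 ∨ w ∈ I := by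
    intro v hv w hadj
    rcases hcover w with h | h | h
    · exact Or.inl h
    · exact absurd hadj (hsep v hv w h)
    · exact Or.inr h
  have hS2 : ∀ v ∈ V2, ∀ w, G.Adj v w → w ∈ V2 ∨ w ∈ I := by
    intro v hv w hadj
    rcases hcover w with h | h | h
    · exact absurd hadj.symm (hsep w h v hv)
    · exact Or.inl h
    · exact Or.inr h
  have k1 := key G hreg V1 I hS1
  have k2 := key G hreg V2 I hS2
  have k1' : (3 : ℝ) * V1.card ≤ 2 * ((edgesWithin G V1).card + (edgesBetween G V1 I).card) := by
    exact_mod_cast k1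
  have k2' : (3 : ℝ) * V2.card ≤ 2 * ((edgesWithin G V2).card + (edgesBetween G V2 I).card) := by
    exact_mod_cast k2
  have hI : (0 : ℝ) ≤ I.card := Nat.cast_nonneg _
  have hm1 : (V1.card : ℝ) + (edgesWithin G V1).card + (edgesBetween G V1 I).card ≤
      max ((V1.card : ℝ) + (edgesWithin G V1).card + (edgesBetween G V1 I).card)
        ((V2.card : ℝ) + (edgesWithin G V2).card + (edgesBetween G V2 I).card) := le_max_left _ _
  have hm2 : (V2.card : ℝ) + (edgesWithin G V2).card + (edgesBetween G V2 I).card ≤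
      max ((V1.card : ℝ) + (edgesWithin G V1).card + (edgesBetween G V1 I).card)
        ((V2.card : ℝ) + (edgesWithin G V2).card + (edgesBetween G V2 I).card) := le_max_right _ _
  apply max_le <;> nlinarith [hbal, hm1, hm2, k1', k2', hI]
end

section
/- Let a, b, c, d, B1, B2, I be nonnegative reals with B2 \ge B1, B1 + B2 = 3I, I \le B2 \le 2I, and let \alpha \in (1/2,1), V > 0 with V_1 + V_2 + I = V. If (5/2)max(V_1 + (B2-B1)/5, V_2) - (1/2)B2 + I \le \alpha(5/2)V, then max(V_1, V_2) \le \alpha V. -/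
theorem core_inequality_forward (V1 V2 I B1 B2 α V : ℝ)
    (hV1 : 0 ≤ V1) (hV2 : 0 ≤ V2) (hI : 0 ≤ I) (hB1 : 0 ≤ B1) (hB2 : 0 ≤ B2)
    (hB : B1 ≤ B2) (hsum : B1 + B2 = 3 * I) (hlo : I ≤ B2) (hhi : B2 ≤ 2 * I)
    (hα1 : 1 / 2 < α) (hα2 : α < 1) (hV : 0 < V) (hpart : V1 + V2 + I = V)
    (h : (5 / 2) * max (V1 + (B2 - B1) / 5) V2 - (1 / 2) * B2 + I ≤ α * ((5 / 2) * V)) :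
    max V1 V2 ≤ α * V := by
  have h1 := le_max_left (V1 + (B2 - B1) / 5) V2
  have h2 := le_max_right (V1 + (B2 - B1) / 5) V2
  apply max_le <;> nlinarith [h1, h2]
end
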